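/- In the reduction graph H: if φ is a proper list coloring of H (with lists L(c_v) = [n], L(I_{uv}) = {k+1,…,n}, all clique vertices receiving distinct colors from [n]), then X = {u ∈ V(G) : φ(c_u) ∈ [k]} is an independent set in G of size at most k. -/

import Mathlib

open Finset

/-- The reduction graph `H` built from a graph `G`. -/
def redGraph {V : Type*} (G : SimpleGraph V) : SimpleGraph (V ⊕ G.edgeSet) :=
  SimpleGraph.fromRel fun a b =>
    match a, b with
    | Sum.inl u, Sum.inl v => u ≠ v
    | Sum.inl w, Sum.inr e => w ∉ (e : Sym2 V)
    | Sum.inr e, Sum.inl w => w ∉ (e : Sym2 V)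
    | Sum.inr _, Sum.inr _ => False

/-!
The clique vertices `c_v` receive `n` distinct colors from `[n]`, so every color in `[n]` is the
color of some `c_w`. The color of `I_{ab}` lies in `[n]`, hence equals `φ(c_w)` for some `w`, and
since `I_{ab}` is adjacent to every `c_w` with `w ∉ {a, b}`, we get `w ∈ {a, b}`. As that color
exceeds `k`, `φ(c_a)` and `φ(c_b)` cannot both lie in `[k]`. The bound `|X| ≤ k` is injectivity
of `u ↦ φ(c_u)` into `[k]`.
-/

namespace redGraph

variable {V α : Type*} {G : SimpleGraph V}

theorem adj_inl_inl {u v : V} : (redGraph G).Adj (.inl u) (.inl v) ↔ u ≠ v := by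
  simp [redGraph, ne_comm]

theorem adj_inl_inr {w : V} {e : G.edgeSet} :
    (redGraph G).Adj (.inl w) (.inr e) ↔ w ∉ (e : Sym2 V) := by
  simp [redGraph]

theorem injective_coloring_inl (φ : (redGraph G).Coloring α) :
    Function.Injective fun v => φ (.inl v) := fun _ _ h =>
  of_not_not fun hne => φ.valid (adj_inl_inl.mpr hne) h

theorem mem_of_coloring_inl_eq_inr (φ : (redGraph G).Coloring α) {w : V} {e : G.edgeSet}
    (h : φ (.inl w) = φ (.inr e)) : w ∈ (e : Sym2 V) :=
  of_not_not fun hw => φ.valid (adj_inl_inr.mpr hw) h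

theorem exists_coloring_inl_eq [Fintype V] (φ : (redGraph G).Coloring α) {s : Finset α}
    (hs : #s ≤ Fintype.card V) (hφ : ∀ v, φ (.inl v) ∈ s) {c : α} (hc : c ∈ s) :
    ∃ w, φ (.inl w) = c := by
  obtain ⟨w, -, hw⟩ := surjOn_of_injOn_of_card_le (s := univ) (fun v => φ (.inl v))
    (fun v _ => hφ v) (injective_coloring_inl φ).injOn (by simpa using hs) hc
  exact ⟨w, hw⟩

end redGraph

theorem independentSet_of_listColoring_general {V : Type*} [Fintype V]
    (G : SimpleGraph V) (k : ℕ)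
    (φ : (redGraph G).Coloring ℕ)
    (hLc : ∀ v : V, φ (Sum.inl v) ∈ Icc 1 (Fintype.card V))
    (hLi : ∀ e : G.edgeSet, φ (Sum.inr e) ∈ Icc (k + 1) (Fintype.card V)) :
    ((↑(univ.filter fun u : V => φ (Sum.inl u) ∈ Icc 1 k) : Set V).Pairwise
        fun a b => ¬ G.Adj a b) ∧
      (univ.filter fun u : V => φ (Sum.inl u) ∈ Icc 1 k).card ≤ k := by
  refine ⟨fun a ha b hb _ hab => ?_, ?_⟩
  · simp only [coe_filter, mem_univ, true_and, Set.mem_ofPred_eq, mem_Icc] at ha hb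
    let e : G.edgeSet := ⟨s(a, b), hab⟩
    have hIe := mem_Icc.mp (hLi e)
    obtain ⟨w, hw⟩ := redGraph.exists_coloring_inl_eq φ (by simp) hLc
      (mem_Icc.mpr ⟨by omega, hIe.2⟩)
    rcases Sym2.mem_iff.mp (redGraph.mem_of_coloring_inl_eq_inr φ hw) with rfl | rfl <;> omega
  · calc #(univ.filter fun u : V => φ (Sum.inl u) ∈ Icc 1 k)
        ≤ #(Icc 1 k) :=
          card_le_card_of_injOn _ (fun u hu => (mem_filter.mp hu).2)
            (redGraph.injective_coloring_inl φ).injOn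
      _ = k := Nat.card_Icc 1 k

/-- If `φ` is a proper list coloring of `H` (lists `L(c_v) = [n]`,
`L(I_e) = {k+1,…,n}`; the clique vertices automatically receive distinct colors
from `[n]`), then `X = {u : φ(c_u) ∈ [k]}` is an independent set in `G` of size at
most `k`. -/
theorem independentSet_of_listColoring {V : Type*} [Fintype V] [DecidableEq V]
    (G : SimpleGraph V) (k : ℕ) (hk : k ≤ Fintype.card V)
    (φ : (redGraph G).Coloring ℕ)
    (hLc : ∀ v : V, φ (Sum.inl v) ∈ Icc 1 (Fintype.card V))
    (hLi : ∀ e : G.edgeSet, φ (Sum.inr e) ∈ Icc (k + 1) (Fintype.card V))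
    (hdist : ∀ u v : V, u ≠ v → φ (Sum.inl u) ≠ φ (Sum.inl v)) :
    ((↑(univ.filter fun u : V => φ (Sum.inl u) ∈ Icc 1 k) : Set V).Pairwise
        fun a b => ¬ G.Adj a b) ∧
      (univ.filter fun u : V => φ (Sum.inl u) ∈ Icc 1 k).card ≤ k :=
  independentSet_of_listColoring_general G k φ hLc hLi
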